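/- Let γ ≥ 1 and C ≥ 0, and let g : ℝ^d → ℝ^d be twice continuously differentiable with ‖D²g(x)(v₁, v₂)‖² ≤ C(1 + ‖x‖)^{γ−3}‖v₁‖²·‖v₂‖² for all x, v₁, v₂ ∈ ℝ^d. Then for all x, x̃, v ∈ ℝ^d, with the same constant C: ‖Dg(x)v − Dg(x̃)v‖² ≤ C·max{1, (1 + ‖x‖ + ‖x̃‖)^{γ−3}}·‖x − x̃‖²·‖v‖². -/

import Mathlib

/-!
By the mean value theorem on the segment `[x', x]`, `‖Dg x - Dg x'‖` is at most `‖x - x'‖` times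
the supremum over the segment of the operator norm of `D²g`. Every point `y` of the segment has
`‖y‖ ≤ ‖x‖ + ‖x'‖`, so the weight `(1 + ‖y‖) ^ (γ - 3)` is at most `1` when `γ ≤ 3` and at most
`(1 + ‖x‖ + ‖x'‖) ^ (γ - 3)` when `γ ≥ 3`.
-/

open Metric

theorem norm_le_max_norm_of_mem_segment {E : Type*} [SeminormedAddCommGroup E] [NormedSpace ℝ E]
    {x y z : E} (hz : z ∈ segment ℝ x y) : ‖z‖ ≤ max ‖x‖ ‖y‖ := by
  have hsub : segment ℝ x y ⊆ closedBall 0 (max ‖x‖ ‖y‖) :=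
    (convex_closedBall 0 _).segment_subset (by simp) (by simp)
  simpa using hsub hz

theorem Real.rpow_le_max_one_rpow {a b : ℝ} (p : ℝ) (ha : 1 ≤ a) (hab : a ≤ b) :
    a ^ p ≤ max 1 (b ^ p) := by
  rcases le_total 0 p with hp | hp
  · exact (Real.rpow_le_rpow (by linarith) hab hp).trans (le_max_right _ _)
  · exact (Real.rpow_le_one_of_one_le_of_nonpos ha hp).trans (le_max_left _ _)

theorem ContinuousLinearMap.opNorm_le_sqrt_of_sq_le {E F G : Type*}
    [SeminormedAddCommGroup E] [NormedSpace ℝ E] [SeminormedAddCommGroup F] [NormedSpace ℝ F]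
    [SeminormedAddCommGroup G] [NormedSpace ℝ G] (B : E →L[ℝ] F →L[ℝ] G) {c : ℝ} (hc : 0 ≤ c)
    (h : ∀ w v, ‖B w v‖ ^ 2 ≤ c * ‖w‖ ^ 2 * ‖v‖ ^ 2) : ‖B‖ ≤ √c := by
  refine B.opNorm_le_bound₂ (Real.sqrt_nonneg c) fun w v => ?_
  refine (pow_le_pow_iff_left₀ (norm_nonneg _) (by positivity) two_ne_zero).mp ?_
  rw [mul_pow, mul_pow, Real.sq_sqrt hc]
  exact h w v

theorem norm_fderiv_apply_sub_sq_le {E F : Type*} [NormedAddCommGroup E] [NormedSpace ℝ E]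
    [NormedAddCommGroup F] [NormedSpace ℝ F] {g : E → F} {c : ℝ} (hc : 0 ≤ c) {x x' : E}
    (hg : ∀ y ∈ segment ℝ x' x, DifferentiableAt ℝ (fderiv ℝ g) y)
    (hD2g : ∀ y ∈ segment ℝ x' x, ∀ w v, ‖fderiv ℝ (fderiv ℝ g) y w v‖ ^ 2 ≤
      c * ‖w‖ ^ 2 * ‖v‖ ^ 2)
    (v : E) :
    ‖fderiv ℝ g x v - fderiv ℝ g x' v‖ ^ 2 ≤ c * ‖x - x'‖ ^ 2 * ‖v‖ ^ 2 := by
  have hlip : ‖fderiv ℝ g x - fderiv ℝ g x'‖ ≤ √c * ‖x - x'‖ :=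
    (convex_segment x' x).norm_image_sub_le_of_norm_fderiv_le hg
      (fun y hy => (fderiv ℝ (fderiv ℝ g) y).opNorm_le_sqrt_of_sq_le hc (hD2g y hy))
      (left_mem_segment ℝ x' x) (right_mem_segment ℝ x' x)
  calc ‖fderiv ℝ g x v - fderiv ℝ g x' v‖ ^ 2
      = ‖(fderiv ℝ g x - fderiv ℝ g x') v‖ ^ 2 := rfl
    _ ≤ (‖fderiv ℝ g x - fderiv ℝ g x'‖ * ‖v‖) ^ 2 := by
        gcongr; exact ContinuousLinearMap.le_opNorm _ _
    _ ≤ (√c * ‖x - x'‖ * ‖v‖) ^ 2 := by gcongr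
    _ = c * ‖x - x'‖ ^ 2 * ‖v‖ ^ 2 := by rw [mul_pow, mul_pow, Real.sq_sqrt hc]

theorem stmt_5 {d : ℕ} (γ C : ℝ) (hC : 0 ≤ C)
    (g : EuclideanSpace ℝ (Fin d) → EuclideanSpace ℝ (Fin d))
    (hg : ContDiff ℝ 2 g)
    (hD2g : ∀ x v₁ v₂ : EuclideanSpace ℝ (Fin d),
      ‖iteratedFDeriv ℝ 2 g x ![v₁, v₂]‖ ^ 2 ≤
        C * (1 + ‖x‖) ^ (γ - 3) * ‖v₁‖ ^ 2 * ‖v₂‖ ^ 2) :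
    ∀ x x' v : EuclideanSpace ℝ (Fin d),
      ‖fderiv ℝ g x v - fderiv ℝ g x' v‖ ^ 2 ≤
        C * max 1 ((1 + ‖x‖ + ‖x'‖) ^ (γ - 3)) * ‖x - x'‖ ^ 2 * ‖v‖ ^ 2 := by
  intro x x' v
  have hDg : Differentiable ℝ (fderiv ℝ g) :=
    (hg.fderiv_right le_rfl).differentiable one_ne_zero
  refine norm_fderiv_apply_sub_sq_le (by positivity) (fun y _ => hDg y) (fun y hyx w u => ?_) v
  have hy : ‖y‖ ≤ ‖x'‖ + ‖x‖ :=
    (norm_le_max_norm_of_mem_segment hyx).trans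
      (max_le_add_of_nonneg (norm_nonneg _) (norm_nonneg _))
  have hweight : (1 + ‖y‖) ^ (γ - 3) ≤ max 1 ((1 + ‖x‖ + ‖x'‖) ^ (γ - 3)) :=
    Real.rpow_le_max_one_rpow _ (by linarith [norm_nonneg y]) (by linarith)
  calc ‖fderiv ℝ (fderiv ℝ g) y w u‖ ^ 2 = ‖iteratedFDeriv ℝ 2 g y ![w, u]‖ ^ 2 := by
        rw [iteratedFDeriv_two_apply]; rfl
    _ ≤ C * (1 + ‖y‖) ^ (γ - 3) * ‖w‖ ^ 2 * ‖u‖ ^ 2 := hD2g y w u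
    _ ≤ C * max 1 ((1 + ‖x‖ + ‖x'‖) ^ (γ - 3)) * ‖w‖ ^ 2 * ‖u‖ ^ 2 := by gcongr
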